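/- arXiv:1502.03569 — 2 statements merged into one kernel-verified Lean document; each statement's English description precedes it below -/
import Mathlib

section
/- Let ρ(y) = e^{2cy}(1 + 2cy/(γσ))^{-γσ/2}(1+cy)^{-1} for fixed c > 0, σ > 1/2 and γ ≥ 1. Then for every integer 0 ≤ α ≤ 3 there is a constant C_α, independent of γ, such that |ρ^{(α)}(y)| ≤ C_α ρ(y) for all y ≥ 0. -/
/-!
Write `u = 1 + 2cy/b`, `v = 1 + cy` and `b = γσ ≥ 1/2`. The logarithmic derivative of the weight is
`g = 2c - c/u - c/v`, so `ρ' = gρ`, `ρ'' = (g' + g²)ρ` and `ρ''' = (g'' + 3gg' + g³)ρ`. For `y ≥ 0`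
the quantities `1/u`, `1/v` lie in `[0, 1]` and `2c/b ≤ 4c`, which bounds `g, g', g''` by
`2c, 5c², 34c³` uniformly in `b`.
-/

open Set Filter

lemma iteratedDeriv_succ_eqOn {f F F' : ℝ → ℝ} {s : Set ℝ} {n : ℕ} (hs : IsOpen s)
    (hF : EqOn (iteratedDeriv n f) F s) (hF' : ∀ x ∈ s, HasDerivAt F (F' x) x) :
    EqOn (iteratedDeriv (n + 1) f) F' s := fun x hx => by
  rw [iteratedDeriv_succ,
    (eventuallyEq_of_mem (hs.mem_nhds hx) hF).deriv_eq, (hF' x hx).deriv]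

lemma iteratedDeriv_eqOn_of_hasDerivAt_mul_self {f g g' g'' : ℝ → ℝ} {s : Set ℝ}
    (hs : IsOpen s) (hf : ∀ x ∈ s, HasDerivAt f (g x * f x) x)
    (hg : ∀ x ∈ s, HasDerivAt g (g' x) x) (hg' : ∀ x ∈ s, HasDerivAt g' (g'' x) x) :
    EqOn (iteratedDeriv 1 f) (fun x => g x * f x) s ∧
      EqOn (iteratedDeriv 2 f) (fun x => (g' x + g x ^ 2) * f x) s ∧
      EqOn (iteratedDeriv 3 f) (fun x => (g'' x + 3 * g x * g' x + g x ^ 3) * f x) s := by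
  have h1 : EqOn (iteratedDeriv 1 f) (fun x => g x * f x) s :=
    iteratedDeriv_succ_eqOn hs (fun x _ => by rw [iteratedDeriv_zero]) hf
  have h2 : EqOn (iteratedDeriv 2 f) (fun x => (g' x + g x ^ 2) * f x) s :=
    iteratedDeriv_succ_eqOn hs h1 fun x hx =>
      ((hg x hx).mul (hf x hx)).congr_deriv (by ring)
  refine ⟨h1, h2, iteratedDeriv_succ_eqOn hs h2 fun x hx => ?_⟩
  exact (((hg' x hx).fun_add ((hg x hx).fun_pow 2)).fun_mul (hf x hx)).congr_deriv
    (by push_cast; ring)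

lemma hasDerivAt_inv_one_add_mul {k y : ℝ} (h : 1 + k * y ≠ 0) :
    HasDerivAt (fun z => (1 + k * z)⁻¹) (-k * (1 + k * y)⁻¹ ^ 2) y := by
  have := (((hasDerivAt_id y).const_mul k).const_add 1).inv h
  simp only [id, mul_one] at this
  exact this.congr_deriv (by field_simp)

lemma inv_one_add_mem_Icc {t : ℝ} (ht : 0 ≤ t) : (1 + t)⁻¹ ∈ Icc 0 1 :=
  ⟨by positivity, inv_le_one_of_one_le₀ (by linarith)⟩

noncomputable def weight (c b : ℝ) (y : ℝ) : ℝ :=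
  Real.exp (2 * c * y) * (1 + 2 * c * y / b) ^ (-(b / 2)) * (1 + c * y)⁻¹

noncomputable def weightLogDeriv (c b : ℝ) (y : ℝ) : ℝ :=
  2 * c - c * (1 + 2 * c / b * y)⁻¹ - c * (1 + c * y)⁻¹

noncomputable def weightLogDeriv' (c b : ℝ) (y : ℝ) : ℝ :=
  c * (2 * c / b) * (1 + 2 * c / b * y)⁻¹ ^ 2 + c ^ 2 * (1 + c * y)⁻¹ ^ 2

noncomputable def weightLogDeriv'' (c b : ℝ) (y : ℝ) : ℝ :=
  -(2 * c * (2 * c / b) ^ 2 * (1 + 2 * c / b * y)⁻¹ ^ 3) - 2 * c ^ 3 * (1 + c * y)⁻¹ ^ 3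

def weightDomain (c b : ℝ) : Set ℝ := {y | 0 < 1 + 2 * c / b * y ∧ 0 < 1 + c * y}

section weight

variable {c b y : ℝ}

lemma isOpen_weightDomain : IsOpen (weightDomain c b) :=
  show IsOpen ({y | 0 < 1 + 2 * c / b * y} ∩ {y | 0 < 1 + c * y}) from
    (isOpen_lt continuous_const (by fun_prop)).inter (isOpen_lt continuous_const (by fun_prop))

lemma mem_weightDomain (hc : 0 < c) (hb : 0 < b) (hy : 0 ≤ y) : y ∈ weightDomain c b :=
  ⟨by positivity, by positivity⟩

lemma weight_pos (hc : 0 < c) (hb : 0 < b) (hy : 0 ≤ y) : 0 < weight c b y := by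
  unfold weight; positivity

lemma hasDerivAt_weight (hb : b ≠ 0) (hy : y ∈ weightDomain c b) :
    HasDerivAt (weight c b) (weightLogDeriv c b y * weight c b y) y := by
  obtain ⟨hu, hv⟩ := hy
  have hexp := ((hasDerivAt_id y).const_mul (2 * c)).exp
  have hpow := (((hasDerivAt_id y).const_mul (2 * c / b)).const_add 1).rpow_const
    (p := -(b / 2)) (Or.inl hu.ne')
  have hinv := hasDerivAt_inv_one_add_mul hv.ne'
  refine ((hexp.mul hpow).mul hinv).congr_of_eventuallyEq ?_ |>.congr_deriv ?_
  · exact .of_forall fun z => by simp only [weight, id, Pi.mul_apply, mul_div_right_comm (2 * c) z]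
  · simp only [weightLogDeriv, weight, id, mul_one, Pi.mul_apply, mul_div_right_comm (2 * c) y]
    rw [Real.rpow_sub hu, Real.rpow_one]
    field_simp
    ring

lemma hasDerivAt_weightLogDeriv (hy : y ∈ weightDomain c b) :
    HasDerivAt (weightLogDeriv c b) (weightLogDeriv' c b y) y := by
  refine ((((hasDerivAt_inv_one_add_mul hy.1.ne').const_mul c).const_sub (2 * c)).sub
    ((hasDerivAt_inv_one_add_mul hy.2.ne').const_mul c)).congr_deriv ?_
  simp only [weightLogDeriv']
  ring

lemma hasDerivAt_weightLogDeriv' (hy : y ∈ weightDomain c b) :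
    HasDerivAt (weightLogDeriv' c b) (weightLogDeriv'' c b y) y := by
  refine ((((hasDerivAt_inv_one_add_mul hy.1.ne').fun_pow 2).const_mul _).add
    (((hasDerivAt_inv_one_add_mul hy.2.ne').fun_pow 2).const_mul _)).congr_deriv ?_
  simp only [weightLogDeriv'']
  push_cast
  ring

lemma two_mul_div_le_four_mul (hc : 0 < c) (hb : 1 / 2 ≤ b) : 2 * c / b ≤ 4 * c := by
  rw [div_le_iff₀ (by linarith)]; nlinarith

lemma abs_weightLogDeriv_le (hc : 0 < c) (hb : 1 / 2 ≤ b) (hy : 0 ≤ y) :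
    |weightLogDeriv c b y| ≤ 2 * c := by
  obtain ⟨hp₀, hp₁⟩ := inv_one_add_mem_Icc (t := 2 * c / b * y) (by positivity)
  obtain ⟨hq₀, hq₁⟩ := inv_one_add_mem_Icc (t := c * y) (by positivity)
  rw [weightLogDeriv, abs_le]
  constructor <;> nlinarith

lemma abs_weightLogDeriv'_le (hc : 0 < c) (hb : 1 / 2 ≤ b) (hy : 0 ≤ y) :
    |weightLogDeriv' c b y| ≤ 5 * c ^ 2 := by
  obtain ⟨hp₀, hp₁⟩ := inv_one_add_mem_Icc (t := 2 * c / b * y) (by positivity)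
  obtain ⟨hq₀, hq₁⟩ := inv_one_add_mem_Icc (t := c * y) (by positivity)
  have ha := two_mul_div_le_four_mul hc hb
  rw [weightLogDeriv', abs_of_nonneg (by positivity)]
  calc _ ≤ c * (4 * c) * 1 ^ 2 + c ^ 2 * 1 ^ 2 := by gcongr
    _ = 5 * c ^ 2 := by ring

lemma abs_weightLogDeriv''_le (hc : 0 < c) (hb : 1 / 2 ≤ b) (hy : 0 ≤ y) :
    |weightLogDeriv'' c b y| ≤ 34 * c ^ 3 := by
  obtain ⟨hp₀, hp₁⟩ := inv_one_add_mem_Icc (t := 2 * c / b * y) (by positivity)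
  obtain ⟨hq₀, hq₁⟩ := inv_one_add_mem_Icc (t := c * y) (by positivity)
  have ha := two_mul_div_le_four_mul hc hb
  rw [weightLogDeriv'', ← neg_add', abs_neg, abs_of_nonneg (by positivity)]
  calc _ ≤ 2 * c * (4 * c) ^ 2 * 1 ^ 3 + 2 * c ^ 3 * 1 ^ 3 := by gcongr
    _ = 34 * c ^ 3 := by ring

lemma iteratedDeriv_weight_eqOn (hb : b ≠ 0) :
    EqOn (iteratedDeriv 1 (weight c b)) (fun x => weightLogDeriv c b x * weight c b x)
        (weightDomain c b) ∧
      EqOn (iteratedDeriv 2 (weight c b))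
        (fun x => (weightLogDeriv' c b x + weightLogDeriv c b x ^ 2) * weight c b x)
        (weightDomain c b) ∧
      EqOn (iteratedDeriv 3 (weight c b))
        (fun x => (weightLogDeriv'' c b x + 3 * weightLogDeriv c b x * weightLogDeriv' c b x +
          weightLogDeriv c b x ^ 3) * weight c b x) (weightDomain c b) :=
  iteratedDeriv_eqOn_of_hasDerivAt_mul_self isOpen_weightDomain
    (fun _ hx => hasDerivAt_weight hb hx) (fun _ hx => hasDerivAt_weightLogDeriv hx)
    (fun _ hx => hasDerivAt_weightLogDeriv' hx)

lemma abs_mul_weight_le {P C : ℝ} (hc : 0 < c) (hb : 0 < b) (hy : 0 ≤ y) (hP : |P| ≤ C) :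
    |P * weight c b y| ≤ C * weight c b y := by
  have hρ := weight_pos hc hb hy
  rw [abs_mul, abs_of_pos hρ]
  gcongr

lemma exists_abs_iteratedDeriv_weight_le (hc : 0 < c) {α : ℕ} (hα : α ≤ 3) :
    ∃ C > 0, ∀ b, 1 / 2 ≤ b → ∀ y, 0 ≤ y →
      |iteratedDeriv α (weight c b) y| ≤ C * weight c b y := by
  interval_cases α
  · exact ⟨1, one_pos, fun b hb y hy => by
      simpa using abs_mul_weight_le hc (by linarith) hy (abs_one (α := ℝ)).le⟩
  · refine ⟨2 * c, by positivity, fun b hb y hy => ?_⟩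
    rw [(iteratedDeriv_weight_eqOn (by linarith)).1 (mem_weightDomain hc (by linarith) hy)]
    exact abs_mul_weight_le hc (by linarith) hy (abs_weightLogDeriv_le hc hb hy)
  · refine ⟨9 * c ^ 2, by positivity, fun b hb y hy => ?_⟩
    rw [(iteratedDeriv_weight_eqOn (by linarith)).2.1 (mem_weightDomain hc (by linarith) hy)]
    refine abs_mul_weight_le hc (by linarith) hy ?_
    have h₁ := abs_weightLogDeriv_le hc hb hy
    have h₂ := abs_weightLogDeriv'_le hc hb hy
    calc _ ≤ |weightLogDeriv' c b y| + |weightLogDeriv c b y| ^ 2 :=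
          (abs_add_le _ _).trans_eq (by rw [abs_pow])
      _ ≤ 5 * c ^ 2 + (2 * c) ^ 2 := by gcongr
      _ = 9 * c ^ 2 := by ring
  · refine ⟨72 * c ^ 3, by positivity, fun b hb y hy => ?_⟩
    rw [(iteratedDeriv_weight_eqOn (by linarith)).2.2 (mem_weightDomain hc (by linarith) hy)]
    refine abs_mul_weight_le hc (by linarith) hy ?_
    have h₁ := abs_weightLogDeriv_le hc hb hy
    have h₂ := abs_weightLogDeriv'_le hc hb hy
    have h₃ := abs_weightLogDeriv''_le hc hb hy
    calc _ ≤ |weightLogDeriv'' c b y| + |3 * weightLogDeriv c b y * weightLogDeriv' c b y| +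
          |weightLogDeriv c b y ^ 3| := abs_add_three _ _ _
      _ = |weightLogDeriv'' c b y| + 3 * |weightLogDeriv c b y| * |weightLogDeriv' c b y| +
          |weightLogDeriv c b y| ^ 3 := by rw [abs_mul, abs_mul, abs_pow, abs_of_pos (three_pos (α := ℝ))]
      _ ≤ 34 * c ^ 3 + 3 * (2 * c) * (5 * c ^ 2) + (2 * c) ^ 3 := by gcongr
      _ = 72 * c ^ 3 := by ring

end weight

/-- Let `ρ(y) = e^{2cy}(1 + 2cy/(γσ))^{-γσ/2}(1+cy)⁻¹` with `c > 0`, `σ > 1/2`, `γ ≥ 1`.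
Then for every integer `0 ≤ α ≤ 3` there is a constant `C_α`, independent of `γ`, such that
`|ρ^{(α)}(y)| ≤ C_α ρ(y)` for all `y ≥ 0`. -/
theorem stmt_7 (c σ : ℝ) (hc : 0 < c) (hσ : 1 / 2 < σ) :
    ∀ α : ℕ, α ≤ 3 → ∃ C > 0, ∀ γ : ℝ, 1 ≤ γ → ∀ y : ℝ, 0 ≤ y →
      |iteratedDeriv α
          (fun z => Real.exp (2 * c * z) * (1 + 2 * c * z / (γ * σ)) ^ (-(γ * σ / 2)) *
            (1 + c * z)⁻¹) y| ≤
        C * (Real.exp (2 * c * y) * (1 + 2 * c * y / (γ * σ)) ^ (-(γ * σ / 2)) *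
          (1 + c * y)⁻¹) := by
  intro α hα
  obtain ⟨C, hC, hbound⟩ := exists_abs_iteratedDeriv_weight_le hc hα
  exact ⟨C, hC, fun γ hγ y hy => hbound (γ * σ) (by nlinarith) y hy⟩
end

section
/- Let σ > 1/2 and s = 3(1+σ). There is a constant C > 0 (depending only on s) such that for every integer m ≥ 8, ∑_{j=4}^{⌊m/2⌋} (m!/(j!(m-j)!)) · ((j-2)!)^{s} · ((m-j-5)!)^{s} ≤ C · ((m-5)!)^{s}. -/
/-!
Put `u = (j-2)! (m-j-5)!` and `B = (m-5)!`. For `4 ≤ j ≤ m/2` two elementary bounds hold: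
`C(m,j) u ≤ 10^5 B`, since `m - j ≥ m/2` gives `(m-j)!/(m-j-5)! ≥ ((m-j)/5)^5 ≥ (m/10)^5`
while `m!/B ≤ m^5`; and `u (m-5) ≤ B`, since `u ≤ (m-6)!` by `a! b! ≤ (a+b)!`.
As `s ≥ 2`, `C(m,j) u^s (m-5) = (C(m,j) u) (u (m-5)) u^(s-2) ≤ 10^5 B^s`, and there are at
most `m - 5` summands.
-/

open Nat Finset

namespace Nat

theorem pow_mul_factorial_sub_le (n k : ℕ) : n ^ k * (n - k)! ≤ k ^ k * n ! := by
  rcases lt_or_ge n k with hnk | hkn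
  · rw [Nat.sub_eq_zero_of_le hnk.le, factorial_zero, mul_one]
    exact (Nat.pow_le_pow_left hnk.le k).trans (Nat.le_mul_of_pos_right _ (factorial_pos n))
  · -- `n + 1 - k`, the smallest factor of `n.descFactorial k`, is at least `n / k`
    have hbase : n ^ k ≤ (k * (n + 1 - k)) ^ k := by
      rcases k.eq_zero_or_pos with rfl | hk
      · simp
      · obtain ⟨t, rfl⟩ := Nat.exists_eq_add_of_le hkn
        rw [show k + t + 1 - k = t + 1 by omega]
        exact Nat.pow_le_pow_left (by nlinarith) k
    calc n ^ k * (n - k)! ≤ k ^ k * (n + 1 - k) ^ k * (n - k)! := by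
          rw [← mul_pow]; exact Nat.mul_le_mul_right _ hbase
      _ ≤ k ^ k * n.descFactorial k * (n - k)! := by
          gcongr; exact pow_sub_le_descFactorial n k
      _ = k ^ k * n ! := by rw [← factorial_mul_descFactorial hkn]; ring

theorem factorial_le_pow_mul_factorial_sub {n k : ℕ} (hkn : k ≤ n) : n ! ≤ n ^ k * (n - k)! := by
  rw [← factorial_mul_descFactorial hkn, mul_comm]
  exact Nat.mul_le_mul_right _ (descFactorial_le_pow n k)

theorem choose_mul_factorial_sub_mul_factorial_sub_five_le {m j : ℕ} (i : ℕ) (hm : 5 ≤ m)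
    (hjm : 2 * j ≤ m) : m.choose j * (j - i)! * (m - j - 5)! ≤ 100000 * (m - 5)! := by
  set n := m - j
  have hn : 0 < n ^ 5 := Nat.pow_pos (by omega)
  have hupper : m.choose j * (j - i)! * (n - 5)! * n ^ 5 ≤ 3125 * m ! := by
    calc m.choose j * (j - i)! * (n - 5)! * n ^ 5
        = m.choose j * (j - i)! * (n ^ 5 * (n - 5)!) := by ring
      _ ≤ m.choose j * j ! * (5 ^ 5 * n !) :=
          Nat.mul_le_mul (Nat.mul_le_mul_left _ (factorial_le (sub_le j i)))
            (pow_mul_factorial_sub_le n 5)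
      _ = 3125 * m ! := by
          rw [← choose_mul_factorial_mul_factorial (by omega : j ≤ m)]; ring
  have hlower : m ! ≤ 32 * n ^ 5 * (m - 5)! := by
    calc m ! ≤ m ^ 5 * (m - 5)! := factorial_le_pow_mul_factorial_sub hm
      _ ≤ (2 * n) ^ 5 * (m - 5)! := by gcongr; omega
      _ = 32 * n ^ 5 * (m - 5)! := by ring
  refine Nat.le_of_mul_le_mul_right ?_ hn
  calc m.choose j * (j - i)! * (n - 5)! * n ^ 5 ≤ 3125 * m ! := hupper
    _ ≤ 3125 * (32 * n ^ 5 * (m - 5)!) := by gcongr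
    _ = 100000 * (m - 5)! * n ^ 5 := by ring

theorem factorial_sub_two_mul_factorial_sub_mul_sub_five_le {m j : ℕ} (hj : 4 ≤ j)
    (hjm : 2 * j ≤ m) : (j - 2)! * (m - j - 5)! * (m - 5) ≤ (m - 5)! := by
  have hsum : (j - 2)! * (m - j - 5)! ≤ (m - 6)! :=
    (Nat.le_of_dvd (factorial_pos _) (factorial_mul_factorial_dvd_factorial_add _ _)).trans
      (factorial_le (by omega))
  rw [show m - 5 = m - 6 + 1 by omega, factorial_succ, mul_comm (m - 6 + 1)]
  exact Nat.mul_le_mul_right _ hsum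

end Nat

theorem Real.mul_rpow_mul_le {c u d B K s : ℝ} (hs : 2 ≤ s) (hc : 0 ≤ c) (hu : 0 ≤ u)
    (hd : 1 ≤ d) (hcu : c * u ≤ K * B) (hud : u * d ≤ B) :
    c * u ^ s * d ≤ K * B ^ s := by
  have hsplit : ∀ x : ℝ, 0 ≤ x → x ^ s = x * x * x ^ (s - 2) := fun x hx ↦ by
    calc x ^ s = x ^ ((2 : ℝ) + (s - 2)) := by ring_nf
      _ = x * x * x ^ (s - 2) := by
          rw [Real.rpow_add' hx (by linarith), Real.rpow_two, sq]
  have huB : u ≤ B := (le_mul_of_one_le_right hu hd).trans hud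
  have hB : 0 ≤ B := hu.trans huB
  rw [hsplit u hu, hsplit B hB]
  calc c * (u * u * u ^ (s - 2)) * d = (c * u) * (u * d) * u ^ (s - 2) := by ring
    _ ≤ (K * B) * B * B ^ (s - 2) := by
        have hKB : 0 ≤ K * B := (mul_nonneg hc hu).trans hcu
        gcongr
    _ = K * (B * B * B ^ (s - 2)) := by ring

/-- Factorial summation estimate: with `s = 3(1+σ)`, `σ > 1/2`, there is `C > 0` such that for
all `m ≥ 8`, `∑_{j=4}^{⌊m/2⌋} (m!/(j!(m-j)!)) ((j-2)!)^s ((m-j-5)!)^s ≤ C ((m-5)!)^s`. -/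
theorem stmt_17 (σ : ℝ) (hσ : 1 / 2 < σ) :
    ∃ C > 0, ∀ m : ℕ, 8 ≤ m →
      ∑ j ∈ Finset.Icc 4 (m / 2),
          (m.choose j : ℝ) * ((j - 2)! : ℝ) ^ (3 * (1 + σ)) *
            ((m - j - 5)! : ℝ) ^ (3 * (1 + σ)) ≤
        C * ((m - 5)! : ℝ) ^ (3 * (1 + σ)) := by
  refine ⟨100000, by norm_num, fun m hm ↦ ?_⟩
  have hs : (2 : ℝ) ≤ 3 * (1 + σ) := by linarith
  have hd : (1 : ℝ) ≤ (m - 5 : ℕ) := by norm_cast; omega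
  have hterm : ∀ j ∈ Icc 4 (m / 2), (m.choose j : ℝ) * ((j - 2)! : ℝ) ^ (3 * (1 + σ)) *
      ((m - j - 5)! : ℝ) ^ (3 * (1 + σ)) * (m - 5 : ℕ) ≤
        100000 * ((m - 5)! : ℝ) ^ (3 * (1 + σ)) := by
    intro j hj
    obtain ⟨hj4, hjm⟩ := mem_Icc.mp hj
    have hud := factorial_sub_two_mul_factorial_sub_mul_sub_five_le hj4 (by omega : 2 * j ≤ m)
    have hcu := choose_mul_factorial_sub_mul_factorial_sub_five_le 2 (by omega : 5 ≤ m)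
      (by omega : 2 * j ≤ m)
    rw [mul_assoc _ (((j - 2)! : ℝ) ^ _), ← Real.mul_rpow (by positivity) (by positivity)]
    refine Real.mul_rpow_mul_le hs (by positivity) (by positivity) hd ?_ ?_
    · rw [← mul_assoc]; exact_mod_cast hcu
    · exact_mod_cast hud
  have hcard : ((Icc 4 (m / 2)).card : ℝ) ≤ (m - 5 : ℕ) := by
    rw [Nat.card_Icc]; norm_cast; omega
  refine le_of_mul_le_mul_right ?_ (one_pos.trans_le hd)
  rw [sum_mul]
  refine (sum_le_card_nsmul _ _ _ hterm).trans ?_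
  rw [nsmul_eq_mul, mul_comm]
  gcongr
end
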